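/- arXiv:1404.0843 — 4 statements merged into one kernel-verified Lean document; each statement's English description precedes it below -/
import Mathlib

section
/- The energy winning condition with initial credit W·(|V|−1) is cyc-Energy-greedy on every arena with integer weights of absolute value at most W: if every cycle in the cycles-decomposition of a play has non-negative label sum, then W·(|V|−1) + c_1 + ... + c_k ≥ 0 for all k; and if every cycle has negative label sum, then the partial sums r + c_1 + ... + c_k drop below 0 eventually for every initial credit r. -/
structure Arena (U : Type) where
  V : Type
  finV : Fintype V
  decV : DecidableEq V
  owner : V → Fin 2
  E : V → V → Prop
  nodead : ∀ v, ∃ w, E v w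
  lab : V → V → U

namespace Arena

variable {U : Type} (A : Arena U)

instance : DecidableEq A.V := A.decV
instance : Fintype A.V := A.finV

/-- An infinite play: consecutive vertices are connected by edges. -/
def IsPlay (π : ℕ → A.V) : Prop := ∀ j, A.E (π j) (π (j + 1))

/-- A strategy: given the history (past vertices, in order) and the current
vertex, produce the next vertex. -/
abbrev Strategy := List A.V → A.V → A.V

def Legal (S : A.Strategy) : Prop := ∀ h v, A.E v (S h v)

def Memoryless (S : A.Strategy) : Prop := ∀ h h' v, S h v = S h' v

/-- The history of a play: the first `j` vertices. -/
def hist (π : ℕ → A.V) (j : ℕ) : List A.V := (List.range j).map π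

/-- A play is consistent with a strategy of player `i`. -/
def Consistent (i : Fin 2) (S : A.Strategy) (π : ℕ → A.V) : Prop :=
  ∀ j, A.owner (π j) = i → π (j + 1) = S (A.hist π j) (π j)

/-- One step of the stack-based cycles-decomposition algorithm.  The stack is
a list of vertices (a simple path).  Pushing vertex `v`: if `v` already occurs
on the stack, the cycle from (the first occurrence of) `v` to the top is popped
and output (represented by its list of vertices, starting with `v`, with an
implicit closing edge back to `v`); otherwise `v` is pushed. -/
def step (s : List A.V) (v : A.V) : List A.V × Option (List A.V) :=
  if v ∈ s then (s.take (s.idxOf v + 1), some (s.drop (s.idxOf v)))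
  else (s ++ [v], none)

/-- The stack after processing vertices `π 0, …, π n`. -/
def stackAt (π : ℕ → A.V) : ℕ → List A.V
  | 0 => [π 0]
  | n + 1 => (A.step (stackAt π n) (π (n + 1))).1

/-- The cycle (if any) output while processing vertex `π (n+1)`. -/
def cycleAt (π : ℕ → A.V) (n : ℕ) : Option (List A.V) :=
  (A.step (A.stackAt π n) (π (n + 1))).2

/-- The labels of the edges of a cycle `[v, w₁, …, w_k]`, i.e. of the edges
`(v,w₁)(w₁,w₂)…(w_k,v)`. -/
def cycLabels : List A.V → List U
  | [] => []
  | v :: rest => List.zipWith A.lab (v :: rest) (rest ++ [v])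

def Objective := (ℕ → A.V) → Prop

/-- First-cycle objective: the first cycle output by the decomposition has its
labels in `Y`. -/
def FCObj (Y : Set (List U)) : A.Objective := fun π =>
  ∃ n c, A.cycleAt π n = some c ∧ (∀ m, m < n → A.cycleAt π m = none) ∧
    A.cycLabels c ∈ Y

/-- All-cycles objective: every cycle of the decomposition has labels in `Y`. -/
def ACObj (Y : Set (List U)) : A.Objective := fun π =>
  ∀ n c, A.cycleAt π n = some c → A.cycLabels c ∈ Y

def shift (π : ℕ → A.V) (k : ℕ) : ℕ → A.V := fun n => π (n + k)

/-- Suffix all-cycles objective: some suffix of the play has all cycles of its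
decomposition with labels in `Y`. -/
def EACObj (Y : Set (List U)) : A.Objective := fun π =>
  ∃ k, A.ACObj Y (A.shift π k)

/-- The objective induced by a winning condition `W ⊆ U^ω`. -/
def WObj (W : Set (ℕ → U)) : A.Objective := fun π =>
  (fun j => A.lab (π j) (π (j + 1))) ∈ W

/-- `S` is a winning strategy for player `i` from `v` for objective `O`. -/
def WinsFrom (O : A.Objective) (i : Fin 2) (S : A.Strategy) (v : A.V) : Prop :=
  A.Legal S ∧ ∀ π, A.IsPlay π → π 0 = v → A.Consistent i S π →
    (if i = 0 then O π else ¬ O π)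

def WinRegion (O : A.Objective) (i : Fin 2) : Set A.V :=
  { v | ∃ S, A.WinsFrom O i S v }

def PointwiseMemoryless (O : A.Objective) (i : Fin 2) : Prop :=
  ∀ v ∈ A.WinRegion O i, ∃ S, A.Memoryless S ∧ A.WinsFrom O i S v

def UniformMemoryless (O : A.Objective) (i : Fin 2) : Prop :=
  ∃ S, A.Memoryless S ∧ ∀ v ∈ A.WinRegion O i, A.WinsFrom O i S v

def Determined (O : A.Objective) : Prop :=
  ∀ v, v ∈ A.WinRegion O 0 ∨ v ∈ A.WinRegion O 1

def PointwiseMemDet (O : A.Objective) : Prop :=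
  A.Determined O ∧ A.PointwiseMemoryless O 0 ∧ A.PointwiseMemoryless O 1

def UniformMemDet (O : A.Objective) : Prop :=
  A.Determined O ∧ A.UniformMemoryless O 0 ∧ A.UniformMemoryless O 1

/-- The game `(A, O)` is `Y`-greedy. -/
def YGreedy (Y : Set (List U)) (O : A.Objective) : Prop :=
  (∀ π, A.IsPlay π → A.ACObj Y π → O π) ∧
  (∀ π, A.IsPlay π → A.ACObj Yᶜ π → ¬ O π)

/-- The arena `A` is `Y`-unambiguous. -/
def Unambiguous (Y : Set (List U)) : Prop :=
  ∀ π, A.IsPlay π → ¬ (A.EACObj Y π ∧ A.EACObj Yᶜ π)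

/-- All vertices belong to player `i`. -/
def SolitaireFor (i : Fin 2) : Prop := ∀ v, A.owner v = i

end Arena

/-- A cycle property is closed under cyclic permutations. -/
def ClosedCyc {U : Type} (Y : Set (List U)) : Prop :=
  ∀ (a : U) (b : List U), (a :: b) ∈ Y → (b ++ [a]) ∈ Y

/-- A cycle property is closed under concatenation. -/
def ClosedConcat {U : Type} (Y : Set (List U)) : Prop :=
  ∀ a b, a ∈ Y → b ∈ Y → (a ++ b) ∈ Y

/-- A Moore machine generating a strategy on arena `A`. -/
structure Moore {U : Type} (A : Arena U) where
  M : Type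
  finM : Fintype M
  m0 : M
  upd : A.V → M → M
  out : A.V → M → A.V

namespace Moore

variable {U : Type} {A : Arena U}

def card (Mm : Moore A) : ℕ := @Fintype.card Mm.M Mm.finM

/-- Memory state reached after reading a history. -/
def run (Mm : Moore A) (h : List A.V) : Mm.M :=
  h.foldl (fun m x => Mm.upd x m) Mm.m0

/-- The Moore machine generates strategy `S`. -/
def Generates (Mm : Moore A) (S : A.Strategy) : Prop :=
  ∀ h x, S h x = Mm.out x (Mm.run h)

end Moore

/-- `cyc-Energy`: the finite sequence has non-negative sum. -/
def cycEnergy : Set (List ℤ) := { l | 0 ≤ l.sum }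

/-!
Run the cycles decomposition along the play. The label sum of a prefix is the label sum of the
current stack, a simple path with at most `|V| - 1` edges and hence weight at least `-W (|V| - 1)`,
plus the label sums of the cycles output so far. If these are all non-negative, the first claim
follows. If they are all negative, each is at most `-1`; as the stack and every cycle hold at most
`|V|` vertices, the first `|V| N` steps of the play output at least `N` cycles, so the prefix sums
are unbounded below.
-/

namespace List

variable {α : Type*} [DecidableEq α] {s : List α} {v : α}

theorem take_idxOf_add_one_of_mem (h : v ∈ s) :
    s.take (s.idxOf v + 1) = s.take (s.idxOf v) ++ [v] := by
  rw [take_add_one, getElem?_eq_getElem (idxOf_lt_length_iff.2 h), getElem_idxOf]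
  rfl

theorem drop_idxOf_of_mem (h : v ∈ s) : s.drop (s.idxOf v) = v :: s.drop (s.idxOf v + 1) := by
  rw [drop_eq_getElem_cons (idxOf_lt_length_iff.2 h), getElem_idxOf]

end List

namespace Arena

section Decomposition

variable {U : Type} (A : Arena U)

theorem getLast?_step_fst (s : List A.V) (v : A.V) : (A.step s v).1.getLast? = some v := by
  unfold step
  split_ifs with h
  · rw [List.take_idxOf_add_one_of_mem h, List.getLast?_concat]
  · exact List.getLast?_concat

theorem nodup_step_fst {s : List A.V} (hs : s.Nodup) (v : A.V) : (A.step s v).1.Nodup := by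
  unfold step
  split_ifs with h
  · exact hs.sublist (List.take_sublist _ _)
  · exact hs.append (List.nodup_singleton v) (by simpa using h)

theorem isChain_step_fst {s : List A.V} {w v : A.V} (hs : s.IsChain A.E)
    (hw : s.getLast? = some w) (hwv : A.E w v) : (A.step s v).1.IsChain A.E := by
  unfold step
  split_ifs
  · exact hs.take _
  · refine hs.append (List.isChain_singleton v) ?_
    simp_all

def cycleLength : Option (List A.V) → ℕ
  | none => 0
  | some c => c.length

theorem length_step (s : List A.V) (v : A.V) :
    (A.step s v).1.length + A.cycleLength (A.step s v).2 = s.length + 1 := by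
  unfold step
  split_ifs with h
  · have := List.idxOf_lt_length_iff.2 h
    simp only [cycleLength, List.length_take, List.length_drop]
    omega
  · simp [cycleLength]

theorem cycleLength_step_le (s : List A.V) (v : A.V) :
    A.cycleLength (A.step s v).2 ≤ s.length := by
  unfold step
  split_ifs <;> simp [cycleLength]

theorem getLast?_stackAt (π : ℕ → A.V) : ∀ n, (A.stackAt π n).getLast? = some (π n)
  | 0 => rfl
  | _ + 1 => A.getLast?_step_fst _ _

theorem nodup_stackAt (π : ℕ → A.V) : ∀ n, (A.stackAt π n).Nodup
  | 0 => List.nodup_singleton _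
  | n + 1 => A.nodup_step_fst (nodup_stackAt π n) _

theorem isChain_stackAt {π : ℕ → A.V} (hπ : A.IsPlay π) : ∀ n, (A.stackAt π n).IsChain A.E
  | 0 => List.isChain_singleton _
  | n + 1 => A.isChain_step_fst (isChain_stackAt hπ n) (A.getLast?_stackAt π n) (hπ n)

theorem length_stackAt_add_sum_cycleLength (π : ℕ → A.V) (n : ℕ) :
    (A.stackAt π n).length + ∑ m ∈ Finset.range n, A.cycleLength (A.cycleAt π m) = n + 1 := by
  induction n with
  | zero => rfl
  | succ n ih =>
    have := A.length_step (A.stackAt π n) (π (n + 1))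
    rw [Finset.sum_range_succ, stackAt, cycleAt]
    omega

theorem cycleLength_cycleAt_le_card (π : ℕ → A.V) (n : ℕ) :
    A.cycleLength (A.cycleAt π n) ≤ Fintype.card A.V :=
  (A.cycleLength_step_le _ _).trans (A.nodup_stackAt π n).length_le_card

variable [AddCommMonoid U]

def pathWeight : List A.V → U
  | a :: b :: t => A.lab a b + pathWeight (b :: t)
  | _ => 0

def cycleWeight : Option (List A.V) → U
  | none => 0
  | some c => (A.cycLabels c).sum

theorem pathWeight_append_cons (t : List A.V) (v : A.V) (d : List A.V) :
    A.pathWeight (t ++ v :: d) = A.pathWeight (t ++ [v]) + A.pathWeight (v :: d) := by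
  induction t with
  | nil => simp [pathWeight]
  | cons a t ih =>
    cases t with
    | nil => simp [pathWeight]
    | cons b t => simp only [List.cons_append, pathWeight] at ih ⊢; rw [ih, add_assoc]

theorem pathWeight_concat {l : List A.V} {w : A.V} (hw : l.getLast? = some w) (v : A.V) :
    A.pathWeight (l ++ [v]) = A.pathWeight l + A.lab w v := by
  obtain ⟨t, rfl⟩ : ∃ t, l = t ++ [w] := List.getLast?_eq_some_iff.1 hw
  rw [List.append_assoc, List.singleton_append, pathWeight_append_cons]
  simp [pathWeight]

theorem sum_cycLabels (v : A.V) (d : List A.V) :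
    (A.cycLabels (v :: d)).sum = A.pathWeight ((v :: d) ++ [v]) := by
  suffices ∀ u, (List.zipWith A.lab (u :: d) (d ++ [v])).sum = A.pathWeight (u :: d ++ [v]) from
    this v
  induction d with
  | nil => intro u; simp [pathWeight]
  | cons x d ih =>
    intro u
    simp only [List.cons_append, List.zipWith_cons_cons, List.sum_cons] at ih ⊢
    rw [ih x]
    rfl

theorem pathWeight_step_add_cycleWeight {s : List A.V} {w : A.V} (hw : s.getLast? = some w)
    (v : A.V) :
    A.pathWeight (A.step s v).1 + A.cycleWeight (A.step s v).2 = A.pathWeight s + A.lab w v := by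
  unfold step
  split_ifs with h
  · have hs := List.take_append_drop (s.idxOf v) s
    rw [List.drop_idxOf_of_mem h] at hs ⊢
    rw [List.take_idxOf_add_one_of_mem h]
    set t := s.take (s.idxOf v)
    set d := s.drop (s.idxOf v + 1)
    have hwd : (v :: d).getLast? = some w := by
      rwa [← hs, List.getLast?_append_cons] at hw
    rw [cycleWeight, sum_cycLabels, A.pathWeight_concat hwd, ← hs,
      A.pathWeight_append_cons t v d, add_assoc]
  · simp [cycleWeight, A.pathWeight_concat hw]

theorem sum_lab_eq_pathWeight_stackAt_add (π : ℕ → A.V) (n : ℕ) :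
    ∑ i ∈ Finset.range n, A.lab (π i) (π (i + 1)) =
      A.pathWeight (A.stackAt π n) + ∑ m ∈ Finset.range n, A.cycleWeight (A.cycleAt π m) := by
  induction n with
  | zero => simp [stackAt, pathWeight]
  | succ n ih =>
    have := A.pathWeight_step_add_cycleWeight (A.getLast?_stackAt π n) (π (n + 1))
    rw [Finset.sum_range_succ, Finset.sum_range_succ, ih, stackAt, cycleAt, add_right_comm,
      ← this]
    abel

end Decomposition

section Energy

variable (A : Arena ℤ)

theorem abs_pathWeight_le {W : ℕ} (hW : ∀ v w, A.E v w → |A.lab v w| ≤ W) :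
    ∀ (a : A.V) (t : List A.V), (a :: t).IsChain A.E → |A.pathWeight (a :: t)| ≤ W * t.length
  | _, [], _ => by simp [pathWeight]
  | a, b :: t, h => by
    rw [List.isChain_cons_cons] at h
    rw [pathWeight, List.length_cons, Nat.cast_succ, mul_add_one, add_comm (_ * _)]
    exact (abs_add_le _ _).trans (add_le_add (hW a b h.1) (abs_pathWeight_le hW b t h.2))

theorem abs_pathWeight_stackAt_le {W : ℕ} (hW : ∀ v w, A.E v w → |A.lab v w| ≤ W)
    {π : ℕ → A.V} (hπ : A.IsPlay π) (n : ℕ) :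
    |A.pathWeight (A.stackAt π n)| ≤ W * (Fintype.card A.V - 1) := by
  obtain ⟨a, t, hat⟩ : ∃ a t, A.stackAt π n = a :: t :=
    List.exists_cons_of_ne_nil fun h => by simpa [h] using A.getLast?_stackAt π n
  have hlen : t.length + 1 ≤ Fintype.card A.V := by
    simpa [hat] using (A.nodup_stackAt π n).length_le_card
  rw [hat]
  refine (A.abs_pathWeight_le hW a t (hat ▸ A.isChain_stackAt hπ n)).trans ?_
  gcongr
  omega

theorem sum_cycleWeight_nonneg {π : ℕ → A.V} (h : A.ACObj cycEnergy π) (n : ℕ) :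
    0 ≤ ∑ m ∈ Finset.range n, A.cycleWeight (A.cycleAt π m) := by
  refine Finset.sum_nonneg fun m _ => ?_
  cases hc : A.cycleAt π m with
  | none => rfl
  | some c => exact h m c hc

theorem exists_sum_cycleWeight_le {π : ℕ → A.V} (h : A.ACObj cycEnergyᶜ π) (N : ℕ) :
    ∃ n, ∑ m ∈ Finset.range n, A.cycleWeight (A.cycleAt π m) ≤ -N := by
  set V := Fintype.card A.V
  have hcycle (m : ℕ) :
      (A.cycleLength (A.cycleAt π m) : ℤ) ≤ V * -A.cycleWeight (A.cycleAt π m) := by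
    have hlen := A.cycleLength_cycleAt_le_card π m
    cases hc : A.cycleAt π m with
    | none => simp [cycleLength, cycleWeight]
    | some c =>
      have hneg : (A.cycLabels c).sum < 0 := not_le.1 (h m c hc)
      rw [hc, cycleLength] at hlen
      rw [cycleLength, cycleWeight]
      nlinarith
  refine ⟨V * N, ?_⟩
  set S := ∑ m ∈ Finset.range (V * N), A.cycleWeight (A.cycleAt π m)
  have hlengths := A.length_stackAt_add_sum_cycleLength π (V * N)
  have hstack := (A.nodup_stackAt π (V * N)).length_le_card
  have hcycles : (∑ m ∈ Finset.range (V * N), A.cycleLength (A.cycleAt π m) : ℤ) ≤ V * -S := by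
    rw [← Finset.sum_neg_distrib, Finset.mul_sum]
    exact Finset.sum_le_sum fun m _ => hcycle m
  have : (V : ℤ) * N < V * (1 - S) := by
    have := congrArg (Nat.cast : ℕ → ℤ) hlengths
    push_cast at this
    linarith
  have := lt_of_mul_lt_mul_left this (by positivity)
  omega

end Energy

end Arena

/-- the energy condition with initial credit W·(|V|−1) is
cyc-Energy-greedy on every arena with weights of absolute value ≤ W. -/
theorem stmt15 (A : Arena ℤ) (W : ℕ)
    (hW : ∀ v w, A.E v w → |A.lab v w| ≤ (W : ℤ))
    (π : ℕ → A.V) (hπ : A.IsPlay π) :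
    (A.ACObj cycEnergy π → ∀ k,
      0 ≤ (W : ℤ) * ((Fintype.card A.V : ℤ) - 1) +
        ∑ i ∈ Finset.range k, A.lab (π i) (π (i + 1))) ∧
    (A.ACObj cycEnergyᶜ π → ∀ r : ℤ, ∃ k,
      r + ∑ i ∈ Finset.range k, A.lab (π i) (π (i + 1)) < 0) := by
  constructor
  · intro hAC k
    have hstack := abs_le.1 (A.abs_pathWeight_stackAt_le hW hπ k)
    rw [A.sum_lab_eq_pathWeight_stackAt_add π k]
    linarith [A.sum_cycleWeight_nonneg hAC k]
  · intro hAC r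
    obtain ⟨k, hk⟩ :=
      A.exists_sum_cycleWeight_le hAC ((r + W * (Fintype.card A.V - 1)).toNat + 1)
    refine ⟨k, ?_⟩
    have hstack := abs_le.1 (A.abs_pathWeight_stackAt_le hW hπ k)
    rw [A.sum_lab_eq_pathWeight_stackAt_add π k]
    push_cast at hk
    linarith [Int.self_le_toNat (r + W * (Fintype.card A.V - 1))]
end

section
/- There exists a cycle property Y closed under cyclic permutations whose complement is not closed under concatenation, and a play whose cycles-decomposition witnesses ambiguity: the play (v1 v2 v1 v3 v2 v4)^ω has a suffix all of whose decomposition cycles have odd length, while the cycles-decomposition of the play itself has all cycles of even length. -/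
/-!
Even length is invariant under rotation, while two odd words concatenate to an even one.
The cycles-decomposition is driven by its stack alone, so along a periodic play it becomes periodic
as soon as the stack recurs after one period; the cycles of the play and of its suffix are then
read off from finitely many steps.
-/

namespace Arena

variable {U : Type} (A : Arena U)

theorem length_cycLabels (c : List A.V) : (A.cycLabels c).length = c.length := by
  cases c <;> simp [cycLabels]

variable {A} {π : ℕ → A.V} {p n₀ : ℕ}

theorem stackAt_add_period (hπ : Function.Periodic π p)
    (hs : A.stackAt π (n₀ + p) = A.stackAt π n₀) (m : ℕ) :
    A.stackAt π (m + n₀ + p) = A.stackAt π (m + n₀) := by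
  induction m with
  | zero => simpa using hs
  | succ m ih =>
    have hv : π (m + n₀ + p + 1) = π (m + n₀ + 1) := by
      rw [Nat.add_right_comm, hπ]
    rw [show m + 1 + n₀ + p = (m + n₀ + p) + 1 by omega, show m + 1 + n₀ = (m + n₀) + 1 by omega]
    simp only [stackAt, ih, hv]

theorem cycleAt_add_period (hπ : Function.Periodic π p)
    (hs : A.stackAt π (n₀ + p) = A.stackAt π n₀) (m : ℕ) :
    A.cycleAt π (m + n₀ + p) = A.cycleAt π (m + n₀) := by
  have hv : π (m + n₀ + p + 1) = π (m + n₀ + 1) := by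
    rw [Nat.add_right_comm, hπ]
  simp only [cycleAt, stackAt_add_period hπ hs, hv]

theorem periodic_shift (hπ : Function.Periodic π p) (k : ℕ) :
    Function.Periodic (A.shift π k) p :=
  hπ.add_const k

theorem ACObj_iff_of_periodic {Y : Set (List U)} (hp : 0 < p) (hπ : Function.Periodic π p)
    (hs : A.stackAt π (n₀ + p) = A.stackAt π n₀) :
    A.ACObj Y π ↔ ∀ m < n₀ + p, ∀ c ∈ A.cycleAt π m, A.cycLabels c ∈ Y := by
  refine ⟨fun h m _ c hc => h m c hc, fun h n => ?_⟩
  induction n using Nat.strong_induction_on with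
  | _ n ih =>
    rcases lt_or_ge n (n₀ + p) with hn | hn
    · exact h n hn
    · obtain ⟨m, rfl⟩ : ∃ m, n = m + n₀ + p := ⟨n - (n₀ + p), by omega⟩
      rw [cycleAt_add_period hπ hs]
      exact ih (m + n₀) (by omega)

end Arena

theorem closedCyc_even_length {U : Type} : ClosedCyc {l : List U | Even l.length} := by
  intro a b h
  simpa [Nat.even_add_one] using h

theorem not_closedConcat_odd_length {U : Type} [Nonempty U] :
    ¬ ClosedConcat {l : List U | Even l.length}ᶜ := by
  intro h
  obtain ⟨u⟩ := ‹Nonempty U›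
  simpa using h [u] [u] (by simp) (by simp)

def completeArena (n : ℕ) : Arena ℕ where
  V := Fin n
  finV := inferInstance
  decV := inferInstance
  owner _ := 0
  E _ _ := True
  nodead v := ⟨v, trivial⟩
  lab _ _ := 0

/-- The play `(v₁ v₂ v₁ v₃ v₂ v₄)^ω`, with `vᵢ` encoded as `i - 1`. -/
def ambiguousPlay : ℕ → (completeArena 4).V :=
  fun n => (![0, 1, 0, 2, 1, 3] : Fin 6 → Fin 4) (Fin.ofNat 6 n)

theorem ambiguousPlay_periodic : Function.Periodic ambiguousPlay 6 := by
  intro n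
  exact congrArg (![0, 1, 0, 2, 1, 3] : Fin 6 → Fin 4) (Fin.ext (Nat.add_mod_right n 6))

/-- The cycles of the play are `v₁v₂` and `v₁v₃v₂v₄`. -/
theorem ACObj_even_ambiguousPlay :
    (completeArena 4).ACObj {l | Even l.length} ambiguousPlay := by
  rw [Arena.ACObj_iff_of_periodic (n₀ := 2) (by norm_num) ambiguousPlay_periodic (by decide)]
  simp only [Set.mem_ofPred_eq, Arena.length_cycLabels]
  decide

/-- The cycles of the suffix from the second vertex are `v₂v₁v₃` and `v₂v₄v₁`. -/
theorem ACObj_odd_shift_ambiguousPlay :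
    (completeArena 4).ACObj {l | Even l.length}ᶜ ((completeArena 4).shift ambiguousPlay 1) := by
  rw [Arena.ACObj_iff_of_periodic (n₀ := 3) (by norm_num)
    (Arena.periodic_shift ambiguousPlay_periodic 1) (by decide)]
  simp only [Set.mem_compl_iff, Set.mem_ofPred_eq, Arena.length_cycLabels]
  decide

/-- there is a cycle property Y (even length) closed under
cyclic permutations whose complement is not closed under concatenation, and a
play whose own decomposition has all cycles in Y while some suffix has all
decomposition cycles in ¬Y — witnessing ambiguity. -/
theorem stmt17 :
    ∃ (Y : Set (List ℕ)), ClosedCyc Y ∧ ¬ ClosedConcat Yᶜ ∧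
      ∃ (A : Arena ℕ) (π : ℕ → A.V),
        A.IsPlay π ∧ A.ACObj Y π ∧ A.EACObj Yᶜ π ∧
        A.EACObj Y π ∧ ¬ A.Unambiguous Y := by
  have hY : (completeArena 4).EACObj {l | Even l.length} ambiguousPlay :=
    ⟨0, ACObj_even_ambiguousPlay⟩
  have hYc : (completeArena 4).EACObj {l | Even l.length}ᶜ ambiguousPlay :=
    ⟨1, ACObj_odd_shift_ambiguousPlay⟩
  have hplay : (completeArena 4).IsPlay ambiguousPlay := fun _ => trivial
  exact ⟨{l | Even l.length}, closedCyc_even_length, not_closedConcat_odd_length,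
    completeArena 4, ambiguousPlay, hplay, ACObj_even_ambiguousPlay, hYc, hY,
    fun hU => hU ambiguousPlay hplay ⟨hY, hYc⟩⟩
end

section
/- The cycle property cyc-GoodForEnergy is closed under cyclic permutations, and both it and its complement are closed under concatenation; consequently every arena is cyc-GoodForEnergy-unambiguous. -/
/-- `cyc-GoodForEnergy`: either the sum of the second components is positive,
or it is zero and the largest first component is even. -/
def cycGFE : Set (List (ℕ × ℤ)) :=
  { l | 0 < (l.map Prod.snd).sum ∨
        ((l.map Prod.snd).sum = 0 ∧
          ∃ m ∈ l.map Prod.fst, (∀ x ∈ l.map Prod.fst, x ≤ m) ∧ Even m) }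

/-!
Cyclic closure and the two concatenation closures are direct computations with sums and maxima.

For unambiguity, suppose that from some point on every cycle of the decomposition of a play is
good, and from some other point on every cycle is bad. On a suffix, take the least stack length
`L` reached infinitely often; from some time on the stack never gets shorter than `L`, so its first
`L` vertices are frozen and the stack returns infinitely often to the same stack `S` without going
below it. The word read between two returns arises from the empty word by inserting cycles of the
decomposition, hence (by the closure properties) is good, resp. bad. The edges on a stack carry
bounded energy, so the energy read over a window of the play is bounded below once all cycles are
good and bounded above once all cycles are bad. Hence infinitely many returns have the same prefix
energy, and the windows between them have energy `0`. Choosing a good and a bad such window that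
contain an occurrence of the largest priority `M` seen infinitely often, `M` is both even and odd.
-/

open Filter Relation

section Insertion

variable {U : Type} {Y : Set (List U)}

def InsertStep (Y : Set (List U)) (u w : List U) : Prop :=
  ∃ x z c, c ∈ Y ∧ u = x ++ z ∧ w = x ++ c ++ z

lemma insertStep_append {c : List U} (hc : c ∈ Y) (u : List U) : InsertStep Y u (u ++ c) :=
  ⟨u, [], c, hc, by simp, by simp⟩

lemma InsertStep.append_right {u w : List U} (h : InsertStep Y u w) (d : List U) :
    InsertStep Y (u ++ d) (w ++ d) := by
  obtain ⟨x, z, c, hc, rfl, rfl⟩ := h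
  exact ⟨x, z ++ d, c, hc, by simp, by simp⟩

lemma Relation.ReflTransGen.insertStep_append_right {u w : List U}
    (h : ReflTransGen (InsertStep Y) u w) (d : List U) :
    ReflTransGen (InsertStep Y) (u ++ d) (w ++ d) :=
  h.lift (· ++ d) fun _ _ h => h.append_right d

lemma ClosedCyc.append_comm (hY : ClosedCyc Y) {u v : List U} (h : u ++ v ∈ Y) : v ++ u ∈ Y := by
  induction u generalizing v with
  | nil => simpa using h
  | cons a u ih => simpa using ih (v := v ++ [a]) (by simpa using hY a (u ++ v) h)

lemma ClosedCyc.compl (hY : ClosedCyc Y) : ClosedCyc Yᶜ :=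
  fun a b hab hba => hab (hY.append_comm (u := b) (v := [a]) hba)

lemma ClosedCyc.insert_mem (hcyc : ClosedCyc Y) (hcat : ClosedConcat Y) {x z c : List U}
    (hxz : x ++ z ∈ Y) (hc : c ∈ Y) : x ++ c ++ z ∈ Y := by
  simpa using hcyc.append_comm (u := c ++ z) (by simpa using hcat c _ hc (hcyc.append_comm hxz))

lemma eq_nil_or_mem_of_reflTransGen_insertStep (hcyc : ClosedCyc Y) (hcat : ClosedConcat Y)
    {w : List U} (h : ReflTransGen (InsertStep Y) [] w) : w = [] ∨ w ∈ Y := by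
  induction h with
  | refl => exact Or.inl rfl
  | tail _ hstep ih =>
    obtain ⟨x, z, c, hc, hxz, rfl⟩ := hstep
    right
    rcases ih with h | h
    · obtain ⟨rfl, rfl⟩ := List.append_eq_nil_iff.1 (hxz.symm.trans h)
      simpa using hc
    · exact hcyc.insert_mem hcat (hxz ▸ h) hc

lemma reflTransGen_insertStep_map_Ico {P : ℕ → List U} {x : ℕ → U} {a b : ℕ} (hab : a ≤ b)
    (hstep : ∀ t, a ≤ t → t < b → ReflTransGen (InsertStep Y) (P (t + 1)) (P t ++ [x t])) :
    ReflTransGen (InsertStep Y) (P b) (P a ++ (List.Ico a b).map x) := by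
  induction b, hab using Nat.le_induction with
  | base => simpa using ReflTransGen.refl
  | succ b hab ih =>
    rw [List.Ico.succ_top hab, List.map_append, ← List.append_assoc]
    exact (hstep b hab b.lt_succ_self).trans
      ((ih fun t h1 h2 => hstep t h1 (by omega)).insertStep_append_right _)

end Insertion

section Recurrence

variable {β : Type} [LinearOrder β] {g : ℕ → β}

lemma exists_eventually_le_frequently_eq (hg : (Set.range g).Finite) :
    ∃ M, (∀ᶠ t in atTop, g t ≤ M) ∧ ∃ᶠ t in atTop, g t = M := by
  set F := {m | ∃ᶠ t in atTop, g t = m}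
  have hF : ∀ᶠ t in atTop, g t ∈ F := by
    have : ∀ m ∈ Set.range g, ∀ᶠ t in atTop, g t = m → m ∈ F := by
      intro m _
      by_cases hm : m ∈ F
      · exact Eventually.of_forall fun _ _ => hm
      · exact (not_frequently.1 hm).mono fun _ h1 h2 => (h1 h2).elim
    filter_upwards [hg.eventually_all.2 this] with t ht using ht _ ⟨t, rfl⟩ rfl
  obtain ⟨t, ht⟩ := hF.exists
  obtain ⟨M, hM, hMmax⟩ := Set.exists_max_image (F ∩ Set.range g) id
    (hg.subset Set.inter_subset_right) ⟨g t, ht, t, rfl⟩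
  exact ⟨M, hF.mono fun s hs => hMmax _ ⟨hs, s, rfl⟩, hM.1⟩

lemma exists_eventually_ge_frequently_eq (hg : (Set.range g).Finite) :
    ∃ m, (∀ᶠ t in atTop, m ≤ g t) ∧ ∃ᶠ t in atTop, g t = m :=
  exists_eventually_le_frequently_eq (β := βᵒᵈ) hg

end Recurrence

namespace Arena

section Monotone

variable {U : Type} {A : Arena U} {Y Y' : Set (List U)}

lemma ACObj.mono {ρ : ℕ → A.V} (hY : A.ACObj Y ρ) (h : Y ⊆ Y') : A.ACObj Y' ρ :=
  fun n c hc => h (hY n c hc)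

lemma EACObj.mono {π : ℕ → A.V} (hY : A.EACObj Y π) (h : Y ⊆ Y') : A.EACObj Y' π :=
  hY.imp fun _ hk => hk.mono h

end Monotone

variable {U : Type} (A : Arena U)

def pathLabels (l : List A.V) : List U := List.zipWith A.lab l l.tail

lemma pathLabels_append_cons : ∀ (p : List A.V) (v : A.V) (w : List A.V),
    A.pathLabels (p ++ v :: w) = A.pathLabels (p ++ [v]) ++ A.pathLabels (v :: w)
  | [], _, _ => by simp [pathLabels]
  | [_], _, _ => rfl
  | a :: b :: p, v, w => by
    simpa [pathLabels] using congrArg (A.lab a b :: ·) (pathLabels_append_cons (b :: p) v w)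

lemma pathLabels_prefix {l₁ l₂ : List A.V} (h : l₁ <+: l₂) :
    A.pathLabels l₁ <+: A.pathLabels l₂ := by
  obtain ⟨r, rfl⟩ := h
  rcases List.eq_nil_or_concat' l₁ with rfl | ⟨p, v, rfl⟩
  · simp [pathLabels]
  cases r with
  | nil => simp
  | cons w r =>
    rw [List.append_assoc, List.singleton_append, A.pathLabels_append_cons p v (w :: r)]
    exact List.prefix_append _ _

lemma cycLabels_cons (v : A.V) (r : List A.V) :
    A.cycLabels (v :: r) = A.pathLabels (v :: r ++ [v]) := by
  have := List.zipWith_append (f := A.lab) (l₁ := v :: r) (l₁' := [v]) (l₂ := r ++ [v])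
    (l₂' := []) (by simp)
  simpa [cycLabels, pathLabels] using this.symm

lemma step_of_mem {s : List A.V} {v : A.V} (hv : v ∈ s) :
    ∃ p r, s = p ++ v :: r ∧ A.step s v = (p ++ [v], some (v :: r)) := by
  have hi := List.idxOf_lt_length_iff.2 hv
  have hdrop : s.drop (s.idxOf v) = v :: s.drop (s.idxOf v + 1) := by
    rw [List.drop_eq_getElem_cons hi, List.getElem_idxOf hi]
  refine ⟨s.take (s.idxOf v), s.drop (s.idxOf v + 1), ?_, ?_⟩
  · rw [← hdrop, List.take_append_drop]
  · rw [step, if_pos hv, hdrop, List.take_add_one, List.getElem?_eq_getElem hi,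
      List.getElem_idxOf hi]
    rfl

lemma step_of_not_mem {s : List A.V} {v : A.V} (hv : v ∉ s) :
    A.step s v = (s ++ [v], none) :=
  if_neg hv

lemma stackAt_eq_concat (ρ : ℕ → A.V) (n : ℕ) : ∃ s, A.stackAt ρ n = s ++ [ρ n] := by
  cases n with
  | zero => exact ⟨[], rfl⟩
  | succ n =>
    by_cases hv : ρ (n + 1) ∈ A.stackAt ρ n
    · obtain ⟨p, r, -, hstep⟩ := A.step_of_mem hv
      exact ⟨p, by rw [stackAt, hstep]⟩
    · exact ⟨A.stackAt ρ n, by rw [stackAt, A.step_of_not_mem hv]⟩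

lemma stackAt_nodup (ρ : ℕ → A.V) (n : ℕ) : (A.stackAt ρ n).Nodup := by
  induction n with
  | zero => simp [stackAt]
  | succ n ih =>
    by_cases hv : ρ (n + 1) ∈ A.stackAt ρ n
    · obtain ⟨p, r, hpr, hstep⟩ := A.step_of_mem hv
      rw [stackAt, hstep]
      rw [hpr] at ih
      exact ih.sublist (by simp)
    · rw [stackAt, A.step_of_not_mem hv]
      exact ih.append (List.nodup_singleton _) (by simpa using hv)

lemma finite_range_stackAt (ρ : ℕ → A.V) : (Set.range (A.stackAt ρ)).Finite :=
  (List.finite_length_le A.V (Fintype.card A.V)).subset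
    (by rintro _ ⟨n, rfl⟩; exact (A.stackAt_nodup ρ n).length_le_card)

lemma stackAt_succ_prefix (ρ : ℕ → A.V) (n : ℕ) :
    A.stackAt ρ (n + 1) <+: A.stackAt ρ n ++ [ρ (n + 1)] := by
  by_cases hv : ρ (n + 1) ∈ A.stackAt ρ n
  · obtain ⟨p, r, hpr, hstep⟩ := A.step_of_mem hv
    rw [stackAt, hstep, hpr]
    exact ⟨r ++ [ρ (n + 1)], by simp⟩
  · rw [stackAt, A.step_of_not_mem hv]

lemma stackAt_take_eq {ρ : ℕ → A.V} {L T : ℕ} (hL : ∀ t, T ≤ t → L ≤ (A.stackAt ρ t).length)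
    {t : ℕ} (ht : T ≤ t) : (A.stackAt ρ t).take L = (A.stackAt ρ T).take L := by
  induction t, ht using Nat.le_induction with
  | base => rfl
  | succ t ht ih =>
    rw [← ih, List.prefix_iff_eq_take.1 (A.stackAt_succ_prefix ρ t), List.take_take,
      min_eq_left (hL _ (by omega)), List.take_append_of_le_length (hL t ht)]

def cycleWord (ρ : ℕ → A.V) (n : ℕ) : List U := (A.cycleAt ρ n).elim [] A.cycLabels

-- No label is created or lost: the new edge is pushed, or it closes a cycle that is cut off.
lemma pathLabels_stackAt_succ_append (ρ : ℕ → A.V) (n : ℕ) :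
    A.pathLabels (A.stackAt ρ (n + 1)) ++ A.cycleWord ρ n =
      A.pathLabels (A.stackAt ρ n) ++ [A.lab (ρ n) (ρ (n + 1))] := by
  have hpush : A.pathLabels (A.stackAt ρ n) ++ [A.lab (ρ n) (ρ (n + 1))] =
      A.pathLabels (A.stackAt ρ n ++ [ρ (n + 1)]) := by
    obtain ⟨s, hs⟩ := A.stackAt_eq_concat ρ n
    rw [hs, List.append_assoc, List.singleton_append, A.pathLabels_append_cons s (ρ n) [ρ (n + 1)]]
    rfl
  rw [hpush, cycleWord, cycleAt, stackAt]
  by_cases hv : ρ (n + 1) ∈ A.stackAt ρ n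
  · obtain ⟨p, r, hpr, hstep⟩ := A.step_of_mem hv
    rw [hstep, hpr, Option.elim_some, cycLabels_cons, List.append_assoc, List.cons_append,
      pathLabels_append_cons (v := ρ (n + 1)) (w := r ++ [ρ (n + 1)])]
  · rw [A.step_of_not_mem hv, Option.elim_none, List.append_nil]

def window (ρ : ℕ → A.V) (a b : ℕ) : List U := (List.Ico a b).map fun t => A.lab (ρ t) (ρ (t + 1))

lemma length_window (ρ : ℕ → A.V) (a b : ℕ) : (A.window ρ a b).length = b - a := by
  simp [window]

lemma mem_window {ρ : ℕ → A.V} {a b : ℕ} {u : U} :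
    u ∈ A.window ρ a b ↔ ∃ t, (a ≤ t ∧ t < b) ∧ A.lab (ρ t) (ρ (t + 1)) = u := by
  simp [window, List.Ico.mem]

lemma window_append (ρ : ℕ → A.V) {a b c : ℕ} (hab : a ≤ b) (hbc : b ≤ c) :
    A.window ρ a c = A.window ρ a b ++ A.window ρ b c := by
  rw [window, ← List.Ico.append_consecutive hab hbc, List.map_append]; rfl

lemma window_succ (ρ : ℕ → A.V) {a b : ℕ} (hab : a ≤ b) :
    A.window ρ a (b + 1) = A.window ρ a b ++ [A.lab (ρ b) (ρ (b + 1))] := by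
  rw [window, List.Ico.succ_top hab, List.map_append]; rfl

lemma window_shift (ρ : ℕ → A.V) (k a b : ℕ) :
    A.window (A.shift ρ k) a b = A.window ρ (a + k) (b + k) := by
  rw [window, window, ← List.Ico.map_add, List.map_map]
  congr 1
  funext t
  simp only [Function.comp_apply, shift]
  congr 2 <;> omega

variable {Y : Set (List U)} {ρ : ℕ → A.V}

lemma window_mem_of_prefix (hcyc : ClosedCyc Y) (hcat : ClosedConcat Y) (hY : A.ACObj Y ρ)
    {a b : ℕ} (hab : a < b) (hpre : ∀ t, a ≤ t → t ≤ b → A.stackAt ρ a <+: A.stackAt ρ t)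
    (hba : A.stackAt ρ b = A.stackAt ρ a) : A.window ρ a b ∈ Y := by
  -- `P t` is the label word of the part of the stack above its bottom `stackAt ρ a`.
  set P : ℕ → List U := fun t =>
    (A.pathLabels (A.stackAt ρ t)).drop (A.pathLabels (A.stackAt ρ a)).length
  have hP : ∀ t, a ≤ t → t ≤ b →
      A.pathLabels (A.stackAt ρ a) ++ P t = A.pathLabels (A.stackAt ρ t) := fun t h₁ h₂ =>
    List.prefix_iff_eq_append.1 (A.pathLabels_prefix (hpre t h₁ h₂))
  have hstep : ∀ t, a ≤ t → t < b → ReflTransGen (InsertStep Y) (P (t + 1))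
      (P t ++ [A.lab (ρ t) (ρ (t + 1))]) := by
    intro t h₁ h₂
    have hcut : P (t + 1) ++ A.cycleWord ρ t = P t ++ [A.lab (ρ t) (ρ (t + 1))] := by
      apply List.append_cancel_left (as := A.pathLabels (A.stackAt ρ a))
      rw [← List.append_assoc, hP (t + 1) (by omega) h₂, ← List.append_assoc, hP t h₁ h₂.le,
        pathLabels_stackAt_succ_append]
    rw [← hcut, cycleWord]
    rcases hc : A.cycleAt ρ t with _ | c
    · simpa using ReflTransGen.refl
    · exact ReflTransGen.single (insertStep_append (hY t c hc) _)
  have hw : ReflTransGen (InsertStep Y) [] (A.window ρ a b) := by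
    simpa [P, hba, window] using reflTransGen_insertStep_map_Ico hab.le hstep
  refine (eq_nil_or_mem_of_reflTransGen_insertStep hcyc hcat hw).resolve_left fun h => ?_
  have := A.length_window ρ a b
  rw [h, List.length_nil] at this
  omega

lemma exists_infinite_window_mem_of_ACObj (hcyc : ClosedCyc Y) (hcat : ClosedConcat Y)
    (hY : A.ACObj Y ρ) :
    ∃ R : Set ℕ, R.Infinite ∧ ∀ a ∈ R, ∀ b ∈ R, a < b → A.window ρ a b ∈ Y := by
  obtain ⟨L, hL, hLfreq⟩ :=
    exists_eventually_ge_frequently_eq (g := fun t => (A.stackAt ρ t).length)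
      (((A.finite_range_stackAt ρ).image List.length).subset (Set.range_comp _ _).le)
  obtain ⟨T, hT⟩ := eventually_atTop.1 hL
  have hS : ∀ t, T ≤ t → (A.stackAt ρ t).length = L → A.stackAt ρ t = (A.stackAt ρ T).take L :=
    fun t ht hlen => by rw [← A.stackAt_take_eq hT ht, ← hlen, List.take_length]
  refine ⟨{t | T ≤ t ∧ (A.stackAt ρ t).length = L},
    Nat.frequently_atTop_iff_infinite.1 ((hLfreq.and_eventually (eventually_ge_atTop T)).mono
      fun _ h => ⟨h.2, h.1⟩), ?_⟩
  rintro a ⟨haT, ha⟩ b ⟨hbT, hb⟩ hab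
  refine A.window_mem_of_prefix hcyc hcat hY hab (fun t h _ => ?_)
    (by rw [hS a haT ha, hS b hbT hb])
  rw [hS a haT ha, ← A.stackAt_take_eq hT (by omega : T ≤ t)]
  exact List.take_prefix _ _

lemma exists_infinite_window_mem (hcyc : ClosedCyc Y) (hcat : ClosedConcat Y) {π : ℕ → A.V}
    (hY : A.EACObj Y π) :
    ∃ R : Set ℕ, R.Infinite ∧ ∀ a ∈ R, ∀ b ∈ R, a < b → A.window π a b ∈ Y := by
  obtain ⟨k, hk⟩ := hY
  obtain ⟨R, hR, hRY⟩ := A.exists_infinite_window_mem_of_ACObj hcyc hcat hk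
  refine ⟨(· + k) '' R, hR.image (add_left_injective k).injOn, ?_⟩
  rintro _ ⟨a, ha, rfl⟩ _ ⟨b, hb, rfl⟩ hab
  rw [← window_shift]
  exact hRY a ha b hb (by simpa using hab)

section Conservation

variable (wt : U → ℤ)

lemma sub_le_window_sum (hY : A.ACObj {l | 0 ≤ (l.map wt).sum} ρ) {a b : ℕ} (hab : a ≤ b) :
    ((A.pathLabels (A.stackAt ρ b)).map wt).sum - ((A.pathLabels (A.stackAt ρ a)).map wt).sum ≤
      ((A.window ρ a b).map wt).sum := by
  induction b, hab using Nat.le_induction with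
  | base => simp [window]
  | succ b hab ih =>
    have hbal := congrArg (fun l => (l.map wt).sum) (A.pathLabels_stackAt_succ_append ρ b)
    have hcyc : 0 ≤ ((A.cycleWord ρ b).map wt).sum := by
      rw [cycleWord]
      rcases hc : A.cycleAt ρ b with _ | c
      · simp
      · exact hY b c hc
    rw [window_succ _ _ hab]
    simp only [List.map_append, List.sum_append, List.map_cons, List.map_nil, List.sum_cons,
      List.sum_nil] at hbal ⊢
    linarith

lemma exists_neg_le_window_sum_of_ACObj (hY : A.ACObj {l | 0 ≤ (l.map wt).sum} ρ) :
    ∃ C, ∀ a b, a ≤ b → -C ≤ ((A.window ρ a b).map wt).sum := by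
  obtain ⟨C, hC⟩ := ((A.finite_range_stackAt ρ).image
    fun l => |((A.pathLabels l).map wt).sum|).bddAbove
  refine ⟨2 * C, fun a b hab => ?_⟩
  have ha := abs_le.1 (hC ⟨_, ⟨a, rfl⟩, rfl⟩)
  have hb := abs_le.1 (hC ⟨_, ⟨b, rfl⟩, rfl⟩)
  linarith [A.sub_le_window_sum wt hY hab]

lemma exists_neg_le_window_sum {π : ℕ → A.V} (hY : A.EACObj {l | 0 ≤ (l.map wt).sum} π) :
    ∃ K C, ∀ a b, K ≤ a → a ≤ b → -C ≤ ((A.window π a b).map wt).sum := by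
  obtain ⟨k, hk⟩ := hY
  obtain ⟨C, hC⟩ := A.exists_neg_le_window_sum_of_ACObj wt hk
  refine ⟨k, C, fun a b ha hab => ?_⟩
  have := hC (a - k) (b - k) (by omega)
  rwa [window_shift, Nat.sub_add_cancel ha, Nat.sub_add_cancel (ha.trans hab)] at this

lemma exists_abs_window_sum_le {π : ℕ → A.V} (h₁ : A.EACObj {l | 0 ≤ (l.map wt).sum} π)
    (h₂ : A.EACObj {l | (l.map wt).sum ≤ 0} π) :
    ∃ K C, ∀ a b, K ≤ a → a ≤ b → |((A.window π a b).map wt).sum| ≤ C := by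
  have hneg (l : List U) : (l.map fun u => -wt u).sum = -(l.map wt).sum := by
    simpa using Multiset.sum_map_neg (m := (l : Multiset U)) (f := wt)
  obtain ⟨K₁, C₁, hC₁⟩ := A.exists_neg_le_window_sum wt h₁
  obtain ⟨K₂, C₂, hC₂⟩ := A.exists_neg_le_window_sum (fun u => -wt u)
    (EACObj.mono h₂ fun l hl => by simpa [hneg] using hl)
  refine ⟨max K₁ K₂, max C₁ C₂, fun a b ha hab => abs_le.2 ⟨?_, ?_⟩⟩
  · linarith [hC₁ a b (le_of_max_le_left ha) hab, le_max_left C₁ C₂]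
  · have := hC₂ a b (le_of_max_le_right ha) hab
    rw [hneg] at this
    linarith [le_max_right C₁ C₂]

end Conservation

end Arena

lemma Arena.exists_window_mem_sum_eq_zero {α : Type} [Preorder α] {A : Arena (α × ℤ)}
    {Y : Set (List (α × ℤ))} (hcyc : ClosedCyc Y) (hcat : ClosedConcat Y) {π : ℕ → A.V}
    (hY : A.EACObj Y π) {K : ℕ} {C : ℤ}
    (hE : ∀ a b, K ≤ a → a ≤ b → |((A.window π a b).map Prod.snd).sum| ≤ C) {M : α}
    (hle : ∀ᶠ t in atTop, (A.lab (π t) (π (t + 1))).1 ≤ M)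
    (hM : ∃ᶠ t in atTop, (A.lab (π t) (π (t + 1))).1 = M) :
    ∃ l ∈ Y, (l.map Prod.snd).sum = 0 ∧ M ∈ l.map Prod.fst ∧ ∀ x ∈ l.map Prod.fst, x ≤ M := by
  obtain ⟨R, hR, hRY⟩ := A.exists_infinite_window_mem hcyc hcat hY
  set E : ℕ → ℤ := fun t => ((A.window π K t).map Prod.snd).sum
  obtain ⟨e, he⟩ : ∃ e, {t | t ∈ R ∧ K ≤ t ∧ E t = e}.Infinite := by
    by_contra! h
    refine (hR.sdiff (Set.finite_lt_nat K))
      (((Set.finite_Icc (-C) C).biUnion fun e _ => h e).subset ?_)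
    rintro t ⟨htR, htK⟩
    simp only [Set.mem_ofPred_eq, not_lt] at htK
    exact Set.mem_biUnion (abs_le.1 (hE K t le_rfl htK)) ⟨htR, htK, rfl⟩
  obtain ⟨N, hN⟩ := eventually_atTop.1 hle
  obtain ⟨a, ⟨haR, haK, hae⟩, haN⟩ := he.exists_gt N
  obtain ⟨t, hat, ht⟩ := frequently_atTop.1 hM a
  obtain ⟨b, ⟨hbR, -, hbe⟩, htb⟩ := he.exists_gt t
  refine ⟨A.window π a b, hRY a haR b hbR (by omega), ?_, ?_, ?_⟩
  · have hsplit : E b = E a + ((A.window π a b).map Prod.snd).sum := by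
      simp only [E, A.window_append π haK (by omega : a ≤ b), List.map_append, List.sum_append]
    omega
  · exact List.mem_map.2 ⟨_, A.mem_window.2 ⟨t, ⟨hat, htb⟩, rfl⟩, ht⟩
  · intro x hx
    obtain ⟨_, hu, rfl⟩ := List.mem_map.1 hx
    obtain ⟨s, ⟨has, -⟩, rfl⟩ := A.mem_window.1 hu
    exact hN s (by omega)

lemma List.Perm.mem_cycGFE_iff {l l' : List (ℕ × ℤ)} (h : l.Perm l') :
    l ∈ cycGFE ↔ l' ∈ cycGFE := by
  simp only [cycGFE, Set.mem_ofPred_eq, (h.map Prod.snd).sum_eq, (h.map Prod.fst).mem_iff]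

lemma sum_snd_nonneg_of_mem_cycGFE {l : List (ℕ × ℤ)} (h : l ∈ cycGFE) :
    0 ≤ (l.map Prod.snd).sum := by
  rcases h with h | ⟨h, -⟩ <;> omega

lemma sum_snd_nonpos_of_not_mem_cycGFE {l : List (ℕ × ℤ)} (h : l ∉ cycGFE) :
    (l.map Prod.snd).sum ≤ 0 :=
  not_lt.1 fun hpos => h (Or.inl hpos)

lemma mem_cycGFE_iff_even {l : List (ℕ × ℤ)} {M : ℕ} (h₀ : (l.map Prod.snd).sum = 0)
    (hM : M ∈ l.map Prod.fst) (hle : ∀ x ∈ l.map Prod.fst, x ≤ M) : l ∈ cycGFE ↔ Even M := by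
  refine ⟨?_, fun he => Or.inr ⟨h₀, M, hM, hle, he⟩⟩
  rintro (h | ⟨-, m, hm, hmle, he⟩)
  · omega
  · rwa [le_antisymm (hle m hm) (hmle M hM)] at he

lemma closedCyc_cycGFE : ClosedCyc cycGFE :=
  fun a b => (List.perm_append_singleton a b).symm.mem_cycGFE_iff.1

lemma closedConcat_cycGFE : ClosedConcat cycGFE := by
  intro a b ha hb
  have hsa := sum_snd_nonneg_of_mem_cycGFE ha
  have hsb := sum_snd_nonneg_of_mem_cycGFE hb
  simp only [cycGFE, Set.mem_ofPred_eq, List.map_append, List.sum_append, List.mem_append]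
    at ha hb hsa hsb ⊢
  rcases ha with ha | ⟨ha, ma, hma, hma_le, hma_even⟩
  · exact Or.inl (by omega)
  rcases hb with hb | ⟨hb, mb, hmb, hmb_le, hmb_even⟩
  · exact Or.inl (by omega)
  refine Or.inr ⟨by omega, ?_⟩
  rcases le_total ma mb with h | h
  · exact ⟨mb, Or.inr hmb, fun x hx => hx.elim (fun hx => (hma_le x hx).trans h) (hmb_le x),
      hmb_even⟩
  · exact ⟨ma, Or.inl hma, fun x hx => hx.elim (hma_le x) (fun hx => (hmb_le x hx).trans h),
      hma_even⟩

lemma closedConcat_compl_cycGFE : ClosedConcat cycGFEᶜ := by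
  intro a b ha hb hab
  have hsa := sum_snd_nonpos_of_not_mem_cycGFE ha
  have hsb := sum_snd_nonpos_of_not_mem_cycGFE hb
  simp only [cycGFE, Set.mem_compl_iff, Set.mem_ofPred_eq, List.map_append, List.sum_append,
    List.mem_append] at ha hb hsa hsb hab
  rcases hab with h | ⟨h, m, hm | hm, hm_le, hm_even⟩
  · omega
  · exact ha (Or.inr ⟨by omega, m, hm, fun x hx => hm_le x (Or.inl hx), hm_even⟩)
  · exact hb (Or.inr ⟨by omega, m, hm, fun x hx => hm_le x (Or.inr hx), hm_even⟩)

/-- cyc-GoodForEnergy is closed under cyclic permutations, it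
and its complement are closed under concatenation, and consequently every
arena is cyc-GoodForEnergy-unambiguous. -/
theorem stmt18 :
    ClosedCyc cycGFE ∧ ClosedConcat cycGFE ∧ ClosedConcat cycGFEᶜ ∧
    ∀ A : Arena (ℕ × ℤ), A.Unambiguous cycGFE := by
  refine ⟨closedCyc_cycGFE, closedConcat_cycGFE, closedConcat_compl_cycGFE, ?_⟩
  rintro A π - ⟨hY, hYc⟩
  obtain ⟨K, C, hE⟩ := A.exists_abs_window_sum_le Prod.snd
    (Arena.EACObj.mono hY fun _ => sum_snd_nonneg_of_mem_cycGFE)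
    (Arena.EACObj.mono hYc fun _ => sum_snd_nonpos_of_not_mem_cycGFE)
  obtain ⟨M, hle, hM⟩ := exists_eventually_le_frequently_eq
    ((Set.finite_range fun p : A.V × A.V => (A.lab p.1 p.2).1).subset
      (Set.range_comp_subset_range (fun t => (π t, π (t + 1))) _))
  obtain ⟨l, hl, hl₀, hlM, hlle⟩ :=
    A.exists_window_mem_sum_eq_zero closedCyc_cycGFE closedConcat_cycGFE hY hE hle hM
  obtain ⟨l', hl', hl'₀, hl'M, hl'le⟩ := A.exists_window_mem_sum_eq_zero closedCyc_cycGFE.compl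
    closedConcat_compl_cycGFE hYc hE hle hM
  exact hl' ((mem_cycGFE_iff_even hl'₀ hl'M hl'le).2 ((mem_cycGFE_iff_even hl₀ hlM hlle).1 hl))
end

section
/- If S is a memoryless winning strategy for Player i from vertex v in a first cycle game FC(Y) with Y closed under cyclic permutations, then S is also a winning strategy from every vertex w that occurs on some play consistent with S starting from v. -/
/-!
A memoryless strategy `S` of player `i` is just a relation on vertices (the edges leaving an
`i`-vertex are cut down to the one chosen by `S`), and the plays consistent with `S` are the
infinite paths of this relation. The first cycle of such a play is read off a lasso: a simple
path `stem ++ cyc` whose last vertex steps back to the head of `cyc`. A lasso at `w` can be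
pulled back along an edge `y → w`: if `y` is new it extends the stem, if `y` lies on the stem
the lasso is cut at `y`, and if `y` lies on `cyc` it becomes the loop `cyc` rotated to start at
`y`. Pulling back along the path from `v` to `w` and then following `S` forever gives a play
from `v` whose first cycle is a rotation of the first cycle of the given play from `w`; the
labels are rotated accordingly, and `Y` is closed under rotation.
-/

namespace List

variable {α : Type*} {R : α → α → Prop}

theorem IsRotated.isChain_append_take_one {l l' : List α} (h : l ~r l')
    (hl : IsChain R (l ++ l.take 1)) : IsChain R (l' ++ l'.take 1) := by
  have key : ∀ l : List α, Cycle.Chain R (l : Cycle α) ↔ IsChain R (l ++ l.take 1) := by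
    rintro (_ | ⟨a, l⟩) <;> simp
  rw [← key, ← Cycle.coe_eq_coe.2 h, key]
  exact hl

structure IsLasso (R : α → α → Prop) (x : α) (stem cyc : List α) : Prop where
  head?_eq : (stem ++ cyc).head? = some x
  nodup : (stem ++ cyc).Nodup
  cyc_ne_nil : cyc ≠ []
  isChain : IsChain R (stem ++ cyc ++ cyc.take 1)

theorem IsLasso.head_step {x y : α} {stem cyc : List α} (hyx : R y x) (h : IsLasso R x stem cyc) :
    ∃ stem' cyc', cyc' ~r cyc ∧ IsLasso R y stem' cyc' := by
  by_cases hstem : y ∈ stem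
  · obtain ⟨s, t, rfl⟩ := append_of_mem hstem
    refine ⟨y :: t, cyc, .refl _, ⟨by simp, ?_, h.cyc_ne_nil, ?_⟩⟩
    · have := h.nodup
      simp only [append_assoc, cons_append] at this ⊢
      exact this.of_append_right
    · have := h.isChain
      simp only [append_assoc, cons_append] at this ⊢
      exact this.right_of_append
  by_cases hcyc : y ∈ cyc
  · obtain ⟨s, t, rfl⟩ := append_of_mem hcyc
    have hrot : s ++ y :: t ~r (y :: t) ++ s := isRotated_append
    refine ⟨[], (y :: t) ++ s, hrot.symm, ⟨by simp, ?_, by simp, ?_⟩⟩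
    · exact hrot.nodup_iff.1 h.nodup.of_append_right
    · rw [nil_append]
      have := h.isChain
      rw [append_assoc] at this
      exact hrot.isChain_append_take_one this.right_of_append
  · refine ⟨y :: stem, cyc, .refl _, ⟨by simp, ?_, h.cyc_ne_nil, ?_⟩⟩
    · exact nodup_cons.2 ⟨by simp [hstem, hcyc], h.nodup⟩
    · obtain ⟨l, hl⟩ := head?_eq_some_iff.1 h.head?_eq
      refine h.isChain.cons fun z hz => ?_
      rw [hl, cons_append, head?_cons, Option.mem_some_iff] at hz
      exact hz ▸ hyx

theorem IsLasso.of_reflTransGen {x y : α} {stem cyc : List α} (hyx : Relation.ReflTransGen R y x)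
    (h : IsLasso R x stem cyc) : ∃ stem' cyc', cyc' ~r cyc ∧ IsLasso R y stem' cyc' := by
  induction hyx using Relation.ReflTransGen.head_induction_on with
  | refl => exact ⟨stem, cyc, .refl _, h⟩
  | head hyz _ ih =>
    obtain ⟨stem', cyc', hrot, h'⟩ := ih
    obtain ⟨stem'', cyc'', hrot', h''⟩ := h'.head_step hyz
    exact ⟨stem'', cyc'', hrot'.trans hrot, h''⟩

end List

theorem ClosedCyc.mem_of_isRotated {U : Type} {Y : Set (List U)} (hY : ClosedCyc Y)
    {l l' : List U} (h : l ~r l') (hl : l ∈ Y) : l' ∈ Y := by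
  obtain ⟨k, rfl⟩ := h
  induction k with
  | zero => simpa using hl
  | succ k ih =>
    rw [← List.rotate_rotate]
    rcases hk : l.rotate k with _ | ⟨a, b⟩
    · simpa [hk] using ih
    · simpa [hk] using hY a b (hk ▸ ih)

theorem ClosedCyc.mem_iff_of_isRotated {U : Type} {Y : Set (List U)} (hY : ClosedCyc Y)
    {l l' : List U} (h : l ~r l') : l ∈ Y ↔ l' ∈ Y :=
  ⟨hY.mem_of_isRotated h, hY.mem_of_isRotated h.symm⟩

namespace Arena

variable {U : Type} {A : Arena U}

theorem cycLabels_eq_zipWith (c : List A.V) : A.cycLabels c = c.zipWith A.lab (c.rotate 1) := by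
  cases c <;> simp [cycLabels]

theorem _root_.List.IsRotated.cycLabels {c c' : List A.V} (h : c ~r c') :
    A.cycLabels c ~r A.cycLabels c' := by
  obtain ⟨k, rfl⟩ := h
  refine ⟨k, ?_⟩
  rw [cycLabels_eq_zipWith, cycLabels_eq_zipWith, List.zipWith_rotate_distrib _ _ _ _ (by simp),
    List.rotate_rotate, List.rotate_rotate, add_comm]

def FirstCycle (π : ℕ → A.V) (c : List A.V) : Prop :=
  ∃ n, A.cycleAt π n = some c ∧ ∀ m < n, A.cycleAt π m = none

theorem length_hist (π : ℕ → A.V) (n : ℕ) : (A.hist π n).length = n := by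
  simp [hist]

theorem hist_succ (π : ℕ → A.V) (n : ℕ) : A.hist π (n + 1) = A.hist π n ++ [π n] := by
  simp [hist, List.range_succ]

theorem head?_hist (π : ℕ → A.V) (n : ℕ) : (A.hist π (n + 1)).head? = some (π 0) := by
  simp [hist, List.range_succ_eq_map]

theorem head?_eq_of_hist_eq {π : ℕ → A.V} {n : ℕ} {l l' : List A.V}
    (h : A.hist π (n + 1) = l ++ l') (hl : l ≠ []) : l.head? = some (π 0) := by
  rw [← List.head?_append_of_ne_nil l hl, ← h, head?_hist]

theorem step_snd_eq_some_iff {s c : List A.V} {v : A.V} :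
    (A.step s v).2 = some c ↔ v ∈ s ∧ s.drop (s.idxOf v) = c := by
  unfold step
  split_ifs <;> simp [*]

theorem cycleAt_eq_none_iff {π : ℕ → A.V} {n : ℕ} :
    A.cycleAt π n = none ↔ π (n + 1) ∉ A.stackAt π n := by
  unfold cycleAt step
  split_ifs <;> simp [*]

theorem stackAt_eq_hist {π : ℕ → A.V} {n : ℕ} (h : ∀ m < n, A.cycleAt π m = none) :
    A.stackAt π n = A.hist π (n + 1) := by
  induction n with
  | zero => simp [stackAt, hist]
  | succ n ih =>
    have hnew := cycleAt_eq_none_iff.1 (h n n.lt_succ_self)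
    rw [stackAt, step, if_neg hnew, ih fun m hm => h m (hm.trans n.lt_succ_self),
      hist_succ _ (n + 1)]

theorem forall_cycleAt_eq_none_iff_nodup {π : ℕ → A.V} {n : ℕ} :
    (∀ m < n, A.cycleAt π m = none) ↔ (A.hist π (n + 1)).Nodup := by
  induction n with
  | zero => simp [hist]
  | succ n ih =>
    rw [Nat.forall_lt_succ_right, hist_succ _ (n + 1), ← List.concat_eq_append, List.nodup_concat]
    constructor
    · rintro ⟨h, hn⟩
      rw [cycleAt_eq_none_iff, stackAt_eq_hist h] at hn
      exact ⟨hn, ih.1 h⟩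
    · rintro ⟨hn, hnd⟩
      refine ⟨ih.2 hnd, ?_⟩
      rwa [cycleAt_eq_none_iff, stackAt_eq_hist (ih.2 hnd)]

theorem firstCycle_iff {π : ℕ → A.V} {c : List A.V} :
    A.FirstCycle π c ↔ ∃ stem, (stem ++ c).Nodup ∧ c ≠ [] ∧
      A.hist π ((stem ++ c).length + 1) = stem ++ c ++ c.take 1 := by
  constructor
  · rintro ⟨n, hc, hnone⟩
    rw [cycleAt, step_snd_eq_some_iff, stackAt_eq_hist hnone] at hc
    obtain ⟨hmem, rfl⟩ := hc
    set l := A.hist π (n + 1)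
    have hidx : l.idxOf (π (n + 1)) < l.length := List.idxOf_lt_length_iff.2 hmem
    refine ⟨l.take (l.idxOf (π (n + 1))), ?_, ?_, ?_⟩
    · rw [List.take_append_drop]
      exact forall_cycleAt_eq_none_iff_nodup.1 hnone
    · simpa using hidx
    · rw [List.take_append_drop, List.take_one_drop_eq_of_lt_length hidx, List.get_eq_getElem,
        List.getElem_idxOf, length_hist, hist_succ]
  · rintro ⟨stem, hnd, hne, hh⟩
    obtain ⟨a, rest, rfl⟩ := List.exists_cons_of_ne_nil hne
    obtain ⟨n, hn⟩ : ∃ n, (stem ++ a :: rest).length = n + 1 :=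
      ⟨stem.length + rest.length, by simp; omega⟩
    rw [hn, hist_succ] at hh
    obtain ⟨hhist, hlast⟩ := List.append_inj' hh (by simp)
    have hnone := forall_cycleAt_eq_none_iff_nodup.2 (hhist ▸ hnd)
    refine ⟨n, ?_, hnone⟩
    have ha : a ∉ stem := fun h => List.disjoint_of_nodup_append hnd h List.mem_cons_self
    rw [cycleAt, step_snd_eq_some_iff, stackAt_eq_hist hnone, hhist]
    simp_all [List.idxOf_append_of_notMem ha]

theorem exists_firstCycle (π : ℕ → A.V) : ∃ c, A.FirstCycle π c := by
  classical
  have hex : ∃ n, A.cycleAt π n ≠ none := by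
    by_contra! h
    have hnd := (forall_cycleAt_eq_none_iff_nodup (n := Fintype.card A.V)).1 fun m _ => h m
    simpa [length_hist] using hnd.length_le_card
  obtain ⟨c, hc⟩ := Option.ne_none_iff_exists'.1 (Nat.find_spec hex)
  exact ⟨c, Nat.find hex, hc, fun m hm => not_not.1 (Nat.find_min hex hm)⟩

theorem FirstCycle.unique {π : ℕ → A.V} {c c' : List A.V} (h : A.FirstCycle π c)
    (h' : A.FirstCycle π c') : c = c' := by
  obtain ⟨n, hn, hlt⟩ := h
  obtain ⟨n', hn', hlt'⟩ := h'
  obtain rfl : n = n' := by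
    by_contra hne
    rcases Nat.lt_or_gt_of_ne hne with h | h
    · simp [hlt' n h] at hn
    · simp [hlt n' h] at hn'
  exact Option.some_injective _ (hn.symm.trans hn')

theorem FirstCycle.fcObj_iff {π : ℕ → A.V} {c : List A.V} (h : A.FirstCycle π c)
    (Y : Set (List U)) : A.FCObj Y π ↔ A.cycLabels c ∈ Y := by
  constructor
  · rintro ⟨n, c', hc', hlt, hY⟩
    exact h.unique ⟨n, hc', hlt⟩ ▸ hY
  · obtain ⟨n, hn, hlt⟩ := h
    exact fun hY => ⟨n, c, hn, hlt, hY⟩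

theorem isChain_hist {R : A.V → A.V → Prop} {π : ℕ → A.V}
    (h : ∀ k, R (π k) (π (k + 1))) (n : ℕ) : List.IsChain R (A.hist π n) := by
  rw [hist, List.isChain_map]
  exact (List.isChain_range _ _).2 fun m _ => h m

/-- For a memoryless `S`, `S []` is its move at any history. -/
def StrategyEdge (i : Fin 2) (S : A.Strategy) (x y : A.V) : Prop :=
  A.E x y ∧ (A.owner x = i → y = S [] x)

section Memoryless

variable {i : Fin 2} {S : A.Strategy}

theorem strategyEdge_of_consistent (hmem : A.Memoryless S) {π : ℕ → A.V} (hπ : A.IsPlay π)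
    (hS : A.Consistent i S π) (k : ℕ) : A.StrategyEdge i S (π k) (π (k + 1)) :=
  ⟨hπ k, fun ho => (hS k ho).trans (hmem _ _ _)⟩

theorem isPlay_and_consistent_of_strategyEdge (hmem : A.Memoryless S) {π : ℕ → A.V}
    (h : ∀ k, A.StrategyEdge i S (π k) (π (k + 1))) : A.IsPlay π ∧ A.Consistent i S π :=
  ⟨fun k => (h k).1, fun k ho => ((h k).2 ho).trans (hmem _ _ _)⟩

theorem exists_play_hist_eq (hleg : A.Legal S) (hmem : A.Memoryless S) {p : List A.V}
    (hp : p ≠ []) (hc : p.IsChain (A.StrategyEdge i S)) :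
    ∃ τ, A.IsPlay τ ∧ A.Consistent i S τ ∧ A.hist τ p.length = p := by
  let τ : ℕ → A.V := fun k =>
    if h : k < p.length then p[k] else (S [])^[k + 1 - p.length] (p.getLast hp)
  have hτ : ∀ k, A.StrategyEdge i S (τ k) (τ (k + 1)) := by
    intro k
    rcases lt_trichotomy (k + 1) p.length with hlt | heq | hgt
    · simp only [τ, dif_pos hlt, dif_pos (by omega : k < p.length)]
      exact hc.getElem k hlt
    · simp only [τ, dif_pos (by omega : k < p.length), dif_neg (by omega : ¬k + 1 < p.length),
        show k + 1 + 1 - p.length = 1 by omega, Function.iterate_one, List.getLast_eq_getElem]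
      simp only [show p.length - 1 = k by omega]
      exact ⟨hleg _ _, fun _ => rfl⟩
    · simp only [τ, dif_neg (by omega : ¬k < p.length), dif_neg (by omega : ¬k + 1 < p.length),
        show k + 1 + 1 - p.length = k + 1 - p.length + 1 by omega, Function.iterate_succ_apply']
      exact ⟨hleg _ _, fun _ => rfl⟩
  obtain ⟨hplay, hcons⟩ := isPlay_and_consistent_of_strategyEdge hmem hτ
  refine ⟨τ, hplay, hcons, List.ext_getElem (length_hist _ _) fun k _ hk => ?_⟩
  simp [hist, τ, hk]

theorem exists_play_firstCycle_isRotated (hleg : A.Legal S) (hmem : A.Memoryless S) {v : A.V}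
    {π : ℕ → A.V} (hπ : A.IsPlay π) (hS : A.Consistent i S π)
    (hreach : Relation.ReflTransGen (A.StrategyEdge i S) v (π 0)) {c : List A.V}
    (hc : A.FirstCycle π c) :
    ∃ τ c', A.IsPlay τ ∧ τ 0 = v ∧ A.Consistent i S τ ∧ A.FirstCycle τ c' ∧
      c' ~r c := by
  obtain ⟨stem, hnd, hne, hh⟩ := firstCycle_iff.1 hc
  have hlasso : List.IsLasso (A.StrategyEdge i S) (π 0) stem c := by
    refine ⟨head?_eq_of_hist_eq hh (by simp [hne]), hnd, hne, ?_⟩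
    exact hh ▸ isChain_hist (strategyEdge_of_consistent hmem hπ hS) _
  obtain ⟨stem', c', hrot, hl⟩ := hlasso.of_reflTransGen hreach
  obtain ⟨τ, hτ, hτS, hτh⟩ :=
    exists_play_hist_eq hleg hmem (by simp [hl.cyc_ne_nil]) hl.isChain
  have hτh' : A.hist τ ((stem' ++ c').length + 1) = stem' ++ c' ++ c'.take 1 := by
    have hlen : (c'.take 1).length = 1 := by
      simpa [Nat.one_le_iff_ne_zero] using hl.cyc_ne_nil
    rwa [List.length_append, hlen] at hτh
  refine ⟨τ, c', hτ, ?_, hτS, firstCycle_iff.2 ⟨stem', hl.nodup, hl.cyc_ne_nil, hτh'⟩,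
    hrot⟩
  have := head?_eq_of_hist_eq hτh' (by simp [hl.cyc_ne_nil])
  rw [hl.head?_eq] at this
  exact (Option.some_injective _ this).symm

end Memoryless

end Arena

/-- a memoryless winning strategy for the first cycle game of a
cyclic-permutation-closed Y also wins from every vertex reachable along a
consistent play. -/
theorem stmt19 {U : Type} (A : Arena U) (Y : Set (List U)) (hY : ClosedCyc Y)
    (i : Fin 2) (S : A.Strategy) (v : A.V) (hmem : A.Memoryless S)
    (hwin : A.WinsFrom (A.FCObj Y) i S v) (w : A.V)
    (hw : ∃ π j, A.IsPlay π ∧ π 0 = v ∧ A.Consistent i S π ∧ π j = w) :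
    A.WinsFrom (A.FCObj Y) i S w := by
  obtain ⟨hleg, hwins⟩ := hwin
  obtain ⟨π, j, hπ, hπ0, hπS, hπj⟩ := hw
  refine ⟨hleg, fun ρ hρ hρ0 hρS => ?_⟩
  have hreach : Relation.ReflTransGen (A.StrategyEdge i S) v (ρ 0) :=
    hπ0 ▸ hρ0 ▸ hπj ▸ (reflTransGen_of_succ_of_le _
      (fun k _ => A.strategyEdge_of_consistent hmem hπ hπS k) j.zero_le).lift π fun _ _ => id
  obtain ⟨c, hc⟩ := A.exists_firstCycle ρ
  obtain ⟨τ, c', hτ, hτ0, hτS, hc', hrot⟩ :=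
    A.exists_play_firstCycle_isRotated hleg hmem hρ hρS hreach hc
  have hsame : A.FCObj Y τ ↔ A.FCObj Y ρ := by
    rw [hc'.fcObj_iff, hc.fcObj_iff, hY.mem_iff_of_isRotated hrot.cycLabels]
  simpa only [hsame] using hwins τ hτ hτ0 hτS
end
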